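/- arXiv:1207.4980 — 5 statements merged into one kernel-verified Lean document; each statement's English description precedes it below -/
import Mathlib

section
/- Let α ≥ α' > 0 and β' ∈ ℝ, and let v = (r, c₁, c₂) and v' = (r', c₁', c₂') in ℝ³ satisfy: c₂ − β'·c₁ + ((β'² − α'²)/2)·r = 0 and c₂' − β'·c₁' + ((β'² − α'²)/2)·r' = 0 (both ν_{α',β'}-slopes vanish), and 0 < c₁' − β'·r' < c₁ − β'·r. Then Δ̄(v') + (α'·r')² < Δ̄(v) + (α·r)², where Δ̄(w) = c₁(w)² − 2·r(w)·c₂(w). -/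
/-! A vanishing `ν_{α,β}`-slope turns `Δ̄ + (α r)²` into the perfect square `(c₁ - β r)²`. With
`α'` in place of `α` this rewrites the left side as `(c₁' - β' r')²`, which is smaller than
`(c₁ - β' r)²`; the latter is `Δ̄(v) + (α' r)²`, and raising `α'` to `α` only adds `(α² - α'²) r² ≥ 0`. -/

theorem disc_add_sq_eq_sq_sub_mul_sub_slope (α β r c₁ c₂ : ℝ) :
    (c₁ ^ 2 - 2 * r * c₂) + (α * r) ^ 2
      = (c₁ - β * r) ^ 2 - 2 * r * (c₂ - β * c₁ + ((β ^ 2 - α ^ 2) / 2) * r) := by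
  ring

theorem disc_add_sq_eq_sq_of_slope_eq_zero {α β r c₁ c₂ : ℝ}
    (h : c₂ - β * c₁ + ((β ^ 2 - α ^ 2) / 2) * r = 0) :
    (c₁ ^ 2 - 2 * r * c₂) + (α * r) ^ 2 = (c₁ - β * r) ^ 2 := by
  rw [disc_add_sq_eq_sq_sub_mul_sub_slope α β, h, mul_zero, sub_zero]

/-- Monotonicity of `Δ̄ + (α r)²` along the reduction argument: if both
`ν_{α',β'}`-slopes of `v = (r, c₁, c₂)` and `v' = (r', c₁', c₂')` vanish,
`α ≥ α' > 0`, and `0 < c₁'^{β'} < c₁^{β'}`, then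
`Δ̄(v') + (α' r')² < Δ̄(v) + (α r)²`. -/
theorem disc_plus_alpha_rank_sq_decreases
    (α α' β' r c₁ c₂ r' c₁' c₂' : ℝ)
    (hαα' : α' ≤ α) (hα' : 0 < α')
    (hv : c₂ - β' * c₁ + ((β' ^ 2 - α' ^ 2) / 2) * r = 0)
    (hv' : c₂' - β' * c₁' + ((β' ^ 2 - α' ^ 2) / 2) * r' = 0)
    (hpos : 0 < c₁' - β' * r') (hlt : c₁' - β' * r' < c₁ - β' * r) :
    (c₁' ^ 2 - 2 * r' * c₂') + (α' * r') ^ 2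
      < (c₁ ^ 2 - 2 * r * c₂) + (α * r) ^ 2 := by
  have hα_sq : (α' * r) ^ 2 ≤ (α * r) ^ 2 := by
    rw [mul_pow, mul_pow]
    gcongr
  calc (c₁' ^ 2 - 2 * r' * c₂') + (α' * r') ^ 2
      = (c₁' - β' * r') ^ 2 := disc_add_sq_eq_sq_of_slope_eq_zero hv'
    _ < (c₁ - β' * r) ^ 2 := by gcongr
    _ = (c₁ ^ 2 - 2 * r * c₂) + (α' * r) ^ 2 := (disc_add_sq_eq_sq_of_slope_eq_zero hv).symm
    _ ≤ (c₁ ^ 2 - 2 * r * c₂) + (α * r) ^ 2 := by gcongr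
end

section
/- Let Γ₀, Γ₁, α₀, b be nonnegative real numbers and let v = (r, c₁, c₂) ∈ ℝ³ with |r| ≥ 1. Suppose 0 ≤ Δ̄(v) ≤ Γ₀ and r² ≤ Γ₁, and suppose there exist α, β with 0 < α ≤ α₀ and |β| ≤ b such that c₂ − β·c₁ + ((β² − α²)/2)·r = 0 (i.e., ν_{α,β}(v) = 0). Then |c₁| ≤ √Γ₁ · ( b + √(α₀² + Γ₀) ). -/
/-!
Vanishing of the tilt slope `ν_{α,β}(v)` says exactly that `(c₁ - β r)² = Δ̄(v) + α² r²`, so the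
twisted class `c₁^β = c₁ - β r` is bounded by the discriminant and by `α₀ |r|`; undoing the twist
costs at most `|β| |r| ≤ b √Γ₁`.
-/

theorem sq_sub_mul_eq_of_tilt_slope_eq_zero {α β r c₁ c₂ : ℝ}
    (h : c₂ - β * c₁ + ((β ^ 2 - α ^ 2) / 2) * r = 0) :
    (c₁ - β * r) ^ 2 = c₁ ^ 2 - 2 * r * c₂ + α ^ 2 * r ^ 2 := by
  linear_combination 2 * r * h

theorem c1_bound_general (Γ₀ Γ₁ α₀ b r c₁ c₂ : ℝ)
    (hΓ₀ : 0 ≤ Γ₀)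
    (hr : 1 ≤ |r|)
    (hd1 : c₁ ^ 2 - 2 * r * c₂ ≤ Γ₀)
    (hr2 : r ^ 2 ≤ Γ₁)
    (hex : ∃ α β : ℝ, 0 < α ∧ α ≤ α₀ ∧ |β| ≤ b ∧
      c₂ - β * c₁ + ((β ^ 2 - α ^ 2) / 2) * r = 0) :
    |c₁| ≤ Real.sqrt Γ₁ * (b + Real.sqrt (α₀ ^ 2 + Γ₀)) := by
  obtain ⟨α, β, hα, hαα₀, hβ, hν⟩ := hex
  have hΓ₁ : 1 ≤ Γ₁ := ((one_le_sq_iff_one_le_abs r).2 hr).trans hr2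
  have hα_sq : α ^ 2 ≤ α₀ ^ 2 := pow_le_pow_left₀ hα.le hαα₀ 2
  have htwist : (c₁ - β * r) ^ 2 ≤ Γ₁ * (α₀ ^ 2 + Γ₀) :=
    calc (c₁ - β * r) ^ 2 = c₁ ^ 2 - 2 * r * c₂ + α ^ 2 * r ^ 2 :=
          sq_sub_mul_eq_of_tilt_slope_eq_zero hν
      _ ≤ Γ₀ + α₀ ^ 2 * Γ₁ := add_le_add hd1 (mul_le_mul hα_sq hr2 (sq_nonneg r) (sq_nonneg α₀))
      _ ≤ Γ₁ * (α₀ ^ 2 + Γ₀) := by nlinarith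
  calc |c₁| = |β * r + (c₁ - β * r)| := by rw [add_sub_cancel]
    _ ≤ |β| * |r| + |c₁ - β * r| := by rw [← abs_mul]; exact abs_add_le _ _
    _ ≤ b * Real.sqrt Γ₁ + Real.sqrt (Γ₁ * (α₀ ^ 2 + Γ₀)) :=
        add_le_add (mul_le_mul hβ (Real.abs_le_sqrt hr2) (abs_nonneg r) ((abs_nonneg β).trans hβ))
          (Real.abs_le_sqrt htwist)
    _ = Real.sqrt Γ₁ * (b + Real.sqrt (α₀ ^ 2 + Γ₀)) := by
        rw [Real.sqrt_mul (by linarith)]; ring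

/-- Bound for `c₁`: if `|r| ≥ 1`, `0 ≤ Δ̄(v) ≤ Γ₀`, `r² ≤ Γ₁`, and there exist
`α, β` with `0 < α ≤ α₀`, `|β| ≤ b`, and `ν_{α,β}(v) = 0`
(i.e. `c₂ − β c₁ + ((β² − α²)/2) r = 0`), then
`|c₁| ≤ √Γ₁ (b + √(α₀² + Γ₀))`. -/
theorem c1_bound (Γ₀ Γ₁ α₀ b r c₁ c₂ : ℝ)
    (hΓ₀ : 0 ≤ Γ₀) (hΓ₁ : 0 ≤ Γ₁) (hα₀ : 0 ≤ α₀) (hb : 0 ≤ b)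
    (hr : 1 ≤ |r|)
    (hd0 : 0 ≤ c₁ ^ 2 - 2 * r * c₂) (hd1 : c₁ ^ 2 - 2 * r * c₂ ≤ Γ₀)
    (hr2 : r ^ 2 ≤ Γ₁)
    (hex : ∃ α β : ℝ, 0 < α ∧ α ≤ α₀ ∧ |β| ≤ b ∧
      c₂ - β * c₁ + ((β ^ 2 - α ^ 2) / 2) * r = 0) :
    |c₁| ≤ Real.sqrt Γ₁ * (b + Real.sqrt (α₀ ^ 2 + Γ₀)) :=
  c1_bound_general Γ₀ Γ₁ α₀ b r c₁ c₂ hΓ₀ hr hd1 hr2 hex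
end

section
/- For all real (β, α) with −2/3 < β < −α and 0 < α < 1/3 (the region V₁): λ_{α,β}(3, −2, 0, 2/3) < λ_{α,β}(1, 1, 1/2, 1/6); explicitly, [(2/3 − β² − β³/2) + (α²/6)(3β + 2)] / (2β + (3/2)β² − (3/2)α²) < −β/3 + 1/3, the denominator 2β + (3/2)β² − (3/2)α² being negative (in particular nonzero) on this region. (This is the comparison λ_{α,β}(Q) < λ_{α,β}(O(1)) on V₁.) -/
/-!
Twisting by `β` turns `ch(O(k))` into `(1, k - β, (k - β)²/2, (k - β)³/6)`, so numerator and
denominator of `λ_{α,β}(O(k))` share the factor `(k - β)² - α²` and `λ_{α,β}(O(k)) = (k - β)/3`.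
After multiplying by the (negative) denominator of `λ_{α,β}(Q)`, the comparison with `O(1)`
becomes `4 - 4β - 5β² + 5α² > 0`, which is clear for `-2/3 < β < 0`.
-/

/-- Second-tilt slope `λ_{α,β}` of a Chern vector `(r, c₁, c₂, c₃)` on `P³`
(`H³ = 1`). -/
noncomputable def tiltLambda (α β r c₁ c₂ c₃ : ℝ) : ℝ :=
  ((c₃ - β * c₂ + (β ^ 2 / 2) * c₁ - (β ^ 3 / 6) * r)
      - (α ^ 2 / 6) * (c₁ - β * r)) /
    (c₂ - β * c₁ + (β ^ 2 / 2) * r - (α ^ 2 / 2) * r)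

section

variable {α β : ℝ}

theorem tiltLambda_lineBundle (k : ℝ) (h : (k - β) ^ 2 ≠ α ^ 2) :
    tiltLambda α β 1 k (k ^ 2 / 2) (k ^ 3 / 6) = (k - β) / 3 := by
  have hden : k ^ 2 / 2 - β * k + β ^ 2 / 2 * 1 - α ^ 2 / 2 * 1 ≠ 0 := by
    contrapose! h
    linear_combination 2 * h
  rw [tiltLambda, div_eq_iff hden]
  ring

theorem tiltLambda_O1 (h2 : β < -α) (h3 : 0 < α) :
    tiltLambda α β 1 1 (1 / 2) (1 / 6) = -β / 3 + 1 / 3 := by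
  have h : (1 - β) ^ 2 ≠ α ^ 2 := by nlinarith
  have := tiltLambda_lineBundle 1 h
  norm_num at this
  rw [this]
  ring

theorem tiltLambda_Q (α β : ℝ) :
    tiltLambda α β 3 (-2) 0 (2 / 3) =
      ((2 / 3 - β ^ 2 - β ^ 3 / 2) + (α ^ 2 / 6) * (3 * β + 2)) /
        (2 * β + (3 / 2) * β ^ 2 - (3 / 2) * α ^ 2) := by
  rw [tiltLambda]
  ring_nf

theorem tiltDenom_Q_neg (h1 : -4 / 3 < β) (hβ : β < 0) :
    2 * β + (3 / 2) * β ^ 2 - (3 / 2) * α ^ 2 < 0 := by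
  nlinarith [sq_nonneg α]

theorem explicit_lambda_Q_lt (h1 : -2 / 3 < β) (hβ : β < 0) :
    ((2 / 3 - β ^ 2 - β ^ 3 / 2) + (α ^ 2 / 6) * (3 * β + 2)) /
        (2 * β + (3 / 2) * β ^ 2 - (3 / 2) * α ^ 2)
      < -β / 3 + 1 / 3 := by
  rw [div_lt_iff_of_neg (tiltDenom_Q_neg (by linarith) hβ)]
  have key : ((2 / 3 - β ^ 2 - β ^ 3 / 2) + (α ^ 2 / 6) * (3 * β + 2)) -
      (-β / 3 + 1 / 3) * (2 * β + (3 / 2) * β ^ 2 - (3 / 2) * α ^ 2) =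
      (4 - 4 * β - 5 * β ^ 2 + 5 * α ^ 2) / 6 := by ring
  nlinarith [sq_nonneg α]

end

theorem lambda_Q_lt_lambda_O1_on_V1_general (α β : ℝ) (h1 : -2/3 < β) (h2 : β < -α)
    (h3 : 0 < α) :
    (2 * β + (3/2) * β ^ 2 - (3/2) * α ^ 2 < 0) ∧
    tiltLambda α β 3 (-2) 0 (2/3) < tiltLambda α β 1 1 (1/2) (1/6) ∧
    ((2/3 - β ^ 2 - β ^ 3 / 2) + (α ^ 2 / 6) * (3 * β + 2)) /
        (2 * β + (3/2) * β ^ 2 - (3/2) * α ^ 2)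
      < -β / 3 + 1/3 := by
  have hβ : β < 0 := by linarith
  have hexplicit := explicit_lambda_Q_lt (α := α) h1 hβ
  refine ⟨tiltDenom_Q_neg (by linarith) hβ, ?_, hexplicit⟩
  rwa [tiltLambda_Q, tiltLambda_O1 h2 h3]

/-- On the region `V₁ = {(β, α) : −2/3 < β < −α, 0 < α < 1/3}`:
`λ_{α,β}(Q) < λ_{α,β}(O(1))`, with `ch(Q) = (3, −2, 0, 2/3)` and
`ch(O(1)) = (1, 1, 1/2, 1/6)`; explicitly
`[(2/3 − β² − β³/2) + (α²/6)(3β + 2)] / (2β + (3/2)β² − (3/2)α²) < −β/3 + 1/3`,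
the denominator `2β + (3/2)β² − (3/2)α²` being negative on this region. -/
theorem lambda_Q_lt_lambda_O1_on_V1 (α β : ℝ) (h1 : -2/3 < β) (h2 : β < -α)
    (h3 : 0 < α) (h4 : α < 1/3) :
    (2 * β + (3/2) * β ^ 2 - (3/2) * α ^ 2 < 0) ∧
    tiltLambda α β 3 (-2) 0 (2/3) < tiltLambda α β 1 1 (1/2) (1/6) ∧
    ((2/3 - β ^ 2 - β ^ 3 / 2) + (α ^ 2 / 6) * (3 * β + 2)) /
        (2 * β + (3/2) * β ^ 2 - (3/2) * α ^ 2)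
      < -β / 3 + 1/3 :=
  lambda_Q_lt_lambda_O1_on_V1_general α β h1 h2 h3
end

section
/- Let d and h be real numbers with d ≥ 2. (i) The unique pair (β, α) with β < 0 < α satisfying both β² − α² = 2d and α² + (β + (2d+1)/2)² = ((2d−1)/2)² is (β, α) = (−(2d+1)/2, (2d−1)/2). (ii) Setting β₀ := −(2d+1)/2 and α₀ := (2d−1)/2, if the Bogomolov–Gieseker inequality c₃^{β₀} ≤ (α₀²/6)·c₁^{β₀} holds for the vector v = (1, 0, −d, h + 2d) — explicitly, if (h + 2d) + β₀·d − β₀³/6 ≤ (α₀²/6)·(−β₀) — then h ≤ (2d² − 5d)/3. (This is the computation behind inequality (4.1) of the Castelnuovo-type Corollary: for a pure one-dimensional scheme C ⊂ P³ of degree d ≥ 2 with h := ch₃(I_C) − 2d, tilt-stability of I_C at the intersection of the hyperbola ν = 0 with the wall B₁ yields h ≤ (2d² − 5d)/3.) -/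
/-!
Adding the equations of the hyperbola `β² - α² = 2d` and of the wall `B₁` cancels `α²` and all
constant terms, leaving `β (2β + 2d + 1) = 0`; so `β < 0` forces `β = -(2d+1)/2`, and then
`α² = β² - 2d = ((2d-1)/2)²`. The Bogomolov–Gieseker inequality at this point is linear in `h`,
and since `(2d+1)³ - (2d-1)²(2d+1) = 8d(2d+1)` its defect is exactly `h - (2d² - 5d)/3`.
-/

section WallB1

variable {d β α : ℝ}

lemma beta_mul_eq_zero_of_hyperbola_of_wallB1 (hC : β ^ 2 - α ^ 2 = 2 * d)
    (hB : α ^ 2 + (β + (2 * d + 1) / 2) ^ 2 = ((2 * d - 1) / 2) ^ 2) :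
    β * (2 * β + (2 * d + 1)) = 0 := by
  linear_combination hC + hB

lemma beta_eq_of_hyperbola_of_wallB1 (hβ : β < 0) (hC : β ^ 2 - α ^ 2 = 2 * d)
    (hB : α ^ 2 + (β + (2 * d + 1) / 2) ^ 2 = ((2 * d - 1) / 2) ^ 2) :
    β = -((2 * d + 1) / 2) := by
  rcases mul_eq_zero.1 (beta_mul_eq_zero_of_hyperbola_of_wallB1 hC hB) with h | h
  · exact absurd h hβ.ne
  · linarith

lemma alpha_eq_of_hyperbola_of_wallB1 (hd : 1 / 2 < d) (hβ : β < 0) (hα : 0 < α)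
    (hC : β ^ 2 - α ^ 2 = 2 * d)
    (hB : α ^ 2 + (β + (2 * d + 1) / 2) ^ 2 = ((2 * d - 1) / 2) ^ 2) :
    α = (2 * d - 1) / 2 := by
  rw [beta_eq_of_hyperbola_of_wallB1 hβ hC hB] at hC
  have hsq : α ^ 2 = ((2 * d - 1) / 2) ^ 2 := by linear_combination -hC
  exact (sq_eq_sq₀ hα.le (by linarith)).1 hsq

theorem hyperbola_inter_wallB1_iff (hd : 1 / 2 < d) :
    (β < 0 ∧ 0 < α ∧ β ^ 2 - α ^ 2 = 2 * d ∧
        α ^ 2 + (β + (2 * d + 1) / 2) ^ 2 = ((2 * d - 1) / 2) ^ 2) ↔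
      (β = -((2 * d + 1) / 2) ∧ α = (2 * d - 1) / 2) := by
  constructor
  · rintro ⟨hβ, hα, hC, hB⟩
    exact ⟨beta_eq_of_hyperbola_of_wallB1 hβ hC hB,
      alpha_eq_of_hyperbola_of_wallB1 hd hβ hα hC hB⟩
  · rintro ⟨rfl, rfl⟩
    exact ⟨by linarith, by linarith, by ring, by ring⟩

end WallB1

theorem bogomolov_gieseker_at_wallB1_iff (d h : ℝ) :
    (h + 2 * d) + (-((2 * d + 1) / 2)) * d - (-((2 * d + 1) / 2)) ^ 3 / 6
        ≤ (((2 * d - 1) / 2) ^ 2 / 6) * (-(-((2 * d + 1) / 2))) ↔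
      h ≤ (2 * d ^ 2 - 5 * d) / 3 := by
  rw [← sub_nonpos, ← sub_nonpos (a := h)]
  ring_nf

/-- (i) For `d ≥ 2`, the unique `(β, α)` with `β < 0 < α` on both the
hyperbola `β² − α² = 2d` and the wall `B₁ : α² + (β + (2d+1)/2)² = ((2d−1)/2)²`
is `(−(2d+1)/2, (2d−1)/2)`.
(ii) At that point, the Bogomolov–Gieseker inequality for
`v = (1, 0, −d, h + 2d)`, namely
`(h + 2d) + β₀ d − β₀³/6 ≤ (α₀²/6)(−β₀)`, implies `h ≤ (2d² − 5d)/3`. -/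
theorem castelnuovo_wall_B1 (d h : ℝ) (hd : 2 ≤ d) :
    (∀ β α : ℝ,
      (β < 0 ∧ 0 < α ∧ β ^ 2 - α ^ 2 = 2 * d ∧
        α ^ 2 + (β + (2 * d + 1) / 2) ^ 2 = ((2 * d - 1) / 2) ^ 2) ↔
      (β = -((2 * d + 1) / 2) ∧ α = (2 * d - 1) / 2)) ∧
    ((h + 2 * d) + (-((2 * d + 1) / 2)) * d - (-((2 * d + 1) / 2)) ^ 3 / 6
        ≤ (((2 * d - 1) / 2) ^ 2 / 6) * (-(-((2 * d + 1) / 2))) →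
      h ≤ (2 * d ^ 2 - 5 * d) / 3) :=
  ⟨fun _ _ => hyperbola_inter_wallB1_iff (by linarith),
    (bogomolov_gieseker_at_wallB1_iff d h).1⟩
end

section
/- Let d and h be real numbers with d > 2. (i) The unique pair (β, α) with β < 0 < α satisfying both β² − α² = 2d and α² + (β + (d+2)/2)² = ((d−2)/2)² is (β, α) = (−(d+2)/2, (d−2)/2). (ii) Setting β₀ := −(d+2)/2 and α₀ := (d−2)/2, if the Bogomolov–Gieseker inequality c₃^{β₀} ≤ (α₀²/6)·c₁^{β₀} holds for the vector v = (1, 0, −d, h + 2d) — explicitly, if (h + 2d) + β₀·d − β₀³/6 ≤ (α₀²/6)·(−β₀) — then h ≤ (d² − 4d)/3. (This is the computation behind inequality (4.2) of the Castelnuovo-type Corollary: for an integral curve C ⊂ P³ of degree d not contained in a plane, with h := ch₃(I_C) − 2d = g − 1, tilt-stability of I_C at the intersection of the hyperbola ν = 0 with the wall B₂ yields g − 1 ≤ (d² − 4d)/3.) -/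
/-! Adding the equations of the hyperbola and of `B₂` eliminates `α` and leaves
`β (2β + d + 2) = 0`, so `β = -(d+2)/2`, and then `α² = ((d-2)/2)²`. At that point the
Bogomolov–Gieseker inequality is linear in `h`: since `(d+2)³ - (d-2)²(d+2) = 8d(d+2)`,
it says exactly `h ≤ (d² - 4d)/3`. -/

namespace CastelnuovoWall

variable {d α β : ℝ}

lemma beta_eq_of_mem_hyperbola_of_mem_B2 (hhyp : β ^ 2 - α ^ 2 = 2 * d)
    (hcirc : α ^ 2 + (β + (d + 2) / 2) ^ 2 = ((d - 2) / 2) ^ 2) :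
    β = 0 ∨ β = -((d + 2) / 2) := by
  have hfac : β * (2 * β + (d + 2)) = 0 := by linear_combination hhyp + hcirc
  rcases mul_eq_zero.mp hfac with h0 | h1
  · exact .inl h0
  · exact .inr (by linarith)

lemma alpha_sq_of_mem_hyperbola (hhyp : β ^ 2 - α ^ 2 = 2 * d) (hβ : β = -((d + 2) / 2)) :
    α ^ 2 = ((d - 2) / 2) ^ 2 := by
  subst hβ
  linear_combination -hhyp

lemma mem_hyperbola_inter_B2_iff (hd : 2 < d) :
    (β < 0 ∧ 0 < α ∧ β ^ 2 - α ^ 2 = 2 * d ∧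
        α ^ 2 + (β + (d + 2) / 2) ^ 2 = ((d - 2) / 2) ^ 2) ↔
      (β = -((d + 2) / 2) ∧ α = (d - 2) / 2) := by
  constructor
  · rintro ⟨hβ, hα, hhyp, hcirc⟩
    have hβ₀ : β = -((d + 2) / 2) :=
      (beta_eq_of_mem_hyperbola_of_mem_B2 hhyp hcirc).resolve_left hβ.ne
    have hα₀ : α = (d - 2) / 2 :=
      (pow_left_inj₀ hα.le (by linarith) two_ne_zero).mp (alpha_sq_of_mem_hyperbola hhyp hβ₀)
    exact ⟨hβ₀, hα₀⟩
  · rintro ⟨rfl, rfl⟩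
    exact ⟨by linarith, by linarith, by ring, by ring⟩

lemma bogomolov_gieseker_at_B2_iff (d h : ℝ) :
    (h + 2 * d) + (-((d + 2) / 2)) * d - (-((d + 2) / 2)) ^ 3 / 6
        ≤ (((d - 2) / 2) ^ 2 / 6) * (-(-((d + 2) / 2))) ↔
      h ≤ (d ^ 2 - 4 * d) / 3 := by
  rw [← sub_nonpos, ← sub_nonpos (a := h)]
  ring_nf

end CastelnuovoWall

open CastelnuovoWall in
/-- (i) For `d > 2`, the unique `(β, α)` with `β < 0 < α` on both the
hyperbola `β² − α² = 2d` and the wall `B₂ : α² + (β + (d+2)/2)² = ((d−2)/2)²`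
is `(−(d+2)/2, (d−2)/2)`.
(ii) At that point, the Bogomolov–Gieseker inequality for
`v = (1, 0, −d, h + 2d)`, namely
`(h + 2d) + β₀ d − β₀³/6 ≤ (α₀²/6)(−β₀)`, implies `h ≤ (d² − 4d)/3`. -/
theorem castelnuovo_wall_B2 (d h : ℝ) (hd : 2 < d) :
    (∀ β α : ℝ,
      (β < 0 ∧ 0 < α ∧ β ^ 2 - α ^ 2 = 2 * d ∧
        α ^ 2 + (β + (d + 2) / 2) ^ 2 = ((d - 2) / 2) ^ 2) ↔
      (β = -((d + 2) / 2) ∧ α = (d - 2) / 2)) ∧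
    ((h + 2 * d) + (-((d + 2) / 2)) * d - (-((d + 2) / 2)) ^ 3 / 6
        ≤ (((d - 2) / 2) ^ 2 / 6) * (-(-((d + 2) / 2))) →
      h ≤ (d ^ 2 - 4 * d) / 3) :=
  ⟨fun _ _ => mem_hyperbola_inter_B2_iff hd, (bogomolov_gieseker_at_B2_iff d h).mp⟩
end
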